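/- arXiv:1403.2882 — 2 statements merged into one kernel-verified Lean document; each statement's English description precedes it below -/
import Mathlib

section
/- Let q be a real number with φ < q ≤ 1 + √3, and let x ∈ [0, S(q)] where S(q) = q²/(q² - q - 1). Define sequences (r_h) of reals and (u_h) of binary digits recursively by r_0 = x; u_h = 1 if f_h ≤ r_h ≤ S(q,h) and u_h = 0 otherwise; and r_{h+1} = q (r_h - u_h f_h). Then x = ∑_{k=0}^∞ f_k u_k / q^k. Consequently the set R_∞(q) := { ∑_{k=0}^∞ u_k f_k/q^k : u ∈ {0,1}^ℕ } equals the interval [0, S(q)]. -/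
/-- The Fibonacci-like sequence with `f 0 = f 1 = 1`. -/
def fib1 : ℕ → ℕ
  | 0 => 1
  | 1 => 1
  | n + 2 => fib1 (n + 1) + fib1 n

/-- The golden ratio. -/
noncomputable def phi : ℝ := (1 + Real.sqrt 5) / 2

/-- `S q h = ∑_{k=0}^∞ f_{h+k} / q^k`. -/
noncomputable def S (q : ℝ) (h : ℕ) : ℝ := ∑' k : ℕ, (fib1 (h + k) : ℝ) / q ^ k

lemma sqrt5_sq : Real.sqrt 5 * Real.sqrt 5 = 5 := Real.mul_self_sqrt (by norm_num)

lemma sqrt5_gt : (2:ℝ) < Real.sqrt 5 := by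
  nlinarith [sqrt5_sq, Real.sqrt_nonneg 5]

lemma phi_gt_one : (1:ℝ) < phi := by unfold phi; nlinarith [sqrt5_gt]

lemma phi_pos : (0:ℝ) < phi := lt_trans one_pos phi_gt_one

lemma phi_sq : phi ^ 2 = phi + 1 := by
  unfold phi; linear_combination (1/4) * sqrt5_sq

lemma fib1_pos : ∀ n, 0 < fib1 n
  | 0 => one_pos
  | 1 => one_pos
  | n+2 => by
    show 0 < fib1 (n+1) + fib1 n
    exact Nat.add_pos_left (fib1_pos (n+1)) _

lemma fib1_cast_pos (n : ℕ) : (0:ℝ) < (fib1 n : ℝ) := by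
  exact_mod_cast fib1_pos n

lemma fib1_le_phi : ∀ n, (fib1 n : ℝ) ≤ phi ^ n
  | 0 => by simp [fib1]
  | 1 => by simpa [fib1] using phi_gt_one.le
  | n+2 => by
    have h1 := fib1_le_phi (n+1)
    have h2 := fib1_le_phi n
    have hp : phi ^ (n+2) = phi^(n+1) + phi^n := by
      linear_combination phi^n * phi_sq
    show ((fib1 (n+1) + fib1 n : ℕ) : ℝ) ≤ phi ^ (n+2)
    push_cast
    linarith

lemma fib1_eq : ∀ n, fib1 n = Nat.fib (n+1)
  | 0 => rfl
  | 1 => rfl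
  | n+2 => by
    show fib1 (n+1) + fib1 n = Nat.fib (n+2+1)
    rw [fib1_eq (n+1), fib1_eq n, show n+2+1 = (n+1)+2 from rfl, Nat.fib_add_two (n := n+1)]
    omega

lemma fib1_mul_le (h k : ℕ) : fib1 h * fib1 (k+1) ≤ fib1 (h+1+k) := by
  rw [fib1_eq h, fib1_eq (k+1), fib1_eq (h+1+k), Nat.fib_add (h+1) k]
  calc Nat.fib (h+1) * Nat.fib (k+1+1)
      = Nat.fib (h+1) * Nat.fib k + Nat.fib (h+1) * Nat.fib (k+1) := by
        rw [Nat.fib_add_two]; ring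
    _ ≤ Nat.fib (h+1) * Nat.fib k + Nat.fib (h+1+1) * Nat.fib (k+1) := by
        gcongr
        omega

section Main

variable {q : ℝ} (hq1 : phi < q)

include hq1

lemma hq_gt1 : 1 < q := lt_trans phi_gt_one hq1
lemma hq_pos : 0 < q := lt_trans one_pos (hq_gt1 hq1)
lemma hD : 0 < q^2 - q - 1 := by
  nlinarith [phi_sq, phi_gt_one, hq1]

lemma ratio_nonneg : 0 ≤ phi / q := div_nonneg phi_pos.le (hq_pos hq1).le

lemma ratio_lt_one : phi / q < 1 :=
  (div_lt_one (hq_pos hq1)).mpr hq1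

lemma summable_geo : Summable (fun k : ℕ => (phi/q)^k) :=
  summable_geometric_of_lt_one (ratio_nonneg hq1) (ratio_lt_one hq1)

lemma term_nonneg (h k : ℕ) : (0:ℝ) ≤ (fib1 (h+k):ℝ)/q^k :=
  div_nonneg (fib1_cast_pos _).le (pow_nonneg (hq_pos hq1).le k)

lemma term_le (h k : ℕ) : (fib1 (h+k):ℝ)/q^k ≤ phi^h * (phi/q)^k := by
  have e : phi^h * (phi/q)^k = phi^(h+k)/q^k := by
    rw [div_pow, pow_add]; ring
  rw [e]
  gcongr
  · exact (pow_pos (hq_pos hq1) k).le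
  · exact fib1_le_phi (h+k)

lemma summable_S (h : ℕ) : Summable (fun k => (fib1 (h+k):ℝ)/q^k) := by
  apply Summable.of_nonneg_of_le (f := fun k => phi^h * (phi/q)^k)
    (term_nonneg hq1 h) (term_le hq1 h)
  exact (summable_geo hq1).mul_left _

lemma S_le (h : ℕ) : S q h ≤ phi^h * (1 - phi/q)⁻¹ := by
  have e : phi^h * (1-phi/q)⁻¹ = ∑' k:ℕ, phi^h * (phi/q)^k := by
    rw [tsum_mul_left, tsum_geometric_of_lt_one (ratio_nonneg hq1) (ratio_lt_one hq1)]
  rw [e]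
  exact Summable.tsum_le_tsum (term_le hq1 h) (summable_S hq1 h) ((summable_geo hq1).mul_left _)

lemma S_ge_fib (h : ℕ) : (fib1 h : ℝ) ≤ S q h := by
  have := Summable.le_tsum (summable_S hq1 h) 0 (fun j _ => term_nonneg hq1 h j)
  simpa [S] using this

lemma S_rec (h : ℕ) : S q h = (fib1 h : ℝ) + S q (h+1) / q := by
  have hs := summable_S hq1 h
  have h1 : S q (h+1) / q = ∑' k:ℕ, (fib1 (h + (k+1)) : ℝ)/q^(k+1) := by
    unfold S
    rw [div_eq_mul_inv, ← tsum_mul_right]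
    congr 1; funext k
    have e : h+1+k = h+(k+1) := by omega
    rw [e, pow_succ, div_eq_mul_inv, div_eq_mul_inv, mul_inv, mul_assoc]
  rw [h1]
  unfold S
  rw [Summable.tsum_eq_zero_add hs]
  simp

lemma S_two : S q 2 = S q 1 + S q 0 := by
  unfold S
  rw [← Summable.tsum_add (summable_S hq1 1) (summable_S hq1 0)]
  congr 1; funext k
  rw [← add_div]
  congr 1
  have e : fib1 (2+k) = fib1 (1+k) + fib1 (0+k) := by
    have e2 : 2+k = k+2 := by omega
    have e1 : 1+k = k+1 := by omega
    have e0 : 0+k = k := by omega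
    rw [e2, e1, e0]
    rfl
  rw [e]
  push_cast
  ring

lemma S_zero : S q 0 = q^2/(q^2-q-1) := by
  have h0 := S_rec hq1 0
  have h1 := S_rec hq1 1
  have h2 := S_two hq1
  have hqne : q ≠ 0 := (hq_pos hq1).ne'
  have hDne : q^2-q-1 ≠ 0 := (hD hq1).ne'
  simp only [fib1, Nat.cast_one] at h0 h1
  rw [h2] at h1
  rw [eq_div_iff hDne]
  field_simp at h0 h1
  linear_combination (q-1)*h0 + h1

end Main

section Main2

variable {q : ℝ} (hq1 : phi < q) (hq2 : q ≤ 1 + Real.sqrt 3)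

include hq1 hq2

lemma S_one_ge : q ≤ S q 1 := by
  have h0 := S_rec hq1 0
  have hqpos := hq_pos hq1
  have hDpos := hD hq1
  have hS0 : (2:ℝ) ≤ S q 0 := by
    rw [S_zero hq1, le_div_iff₀ hDpos]
    have h3 : Real.sqrt 3 * Real.sqrt 3 = 3 := Real.mul_self_sqrt (by norm_num)
    have ha : q - 1 ≤ Real.sqrt 3 := by linarith
    have hb : (0:ℝ) ≤ Real.sqrt 3 + (q - 1) := by
      have := hq_gt1 hq1
      have := Real.sqrt_nonneg 3
      linarith
    nlinarith [mul_nonneg (sub_nonneg.2 ha) hb]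
  simp only [fib1, Nat.cast_one] at h0
  have hd : (1:ℝ) ≤ S q 1 / q := by
    rw [h0] at hS0; norm_num at hS0; linarith
  exact (one_le_div hqpos).1 hd

lemma S_ge_mul (h : ℕ) : (fib1 h:ℝ) * q ≤ S q (h+1) := by
  have h1 : (fib1 h:ℝ) * S q 1 ≤ S q (h+1) := by
    unfold S
    rw [← tsum_mul_left]
    apply Summable.tsum_le_tsum _ ((summable_S hq1 1).mul_left _) (summable_S hq1 (h+1))
    intro k
    rw [mul_div_assoc']
    apply div_le_div_of_nonneg_right ?_ (pow_pos (hq_pos hq1) k).le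
    have := fib1_mul_le h k
    have e : 1 + k = k + 1 := by omega
    rw [e]
    exact_mod_cast this
  calc (fib1 h:ℝ) * q ≤ (fib1 h:ℝ) * S q 1 := by
        have := S_one_ge hq1 hq2
        have := fib1_cast_pos h
        nlinarith
    _ ≤ S q (h+1) := h1

end Main2

open Classical in
theorem key {q : ℝ} (hq1 : phi < q) (hq2 : q ≤ 1 + Real.sqrt 3)
    (x : ℝ) (hx0 : 0 ≤ x) (hx1 : x ≤ q ^ 2 / (q ^ 2 - q - 1))
    (r u : ℕ → ℝ) (hr0 : r 0 = x)
    (hu : ∀ h : ℕ, u h = if (fib1 h : ℝ) ≤ r h ∧ r h ≤ S q h then 1 else 0)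
    (hr : ∀ h : ℕ, r (h + 1) = q * (r h - u h * (fib1 h : ℝ))) :
    HasSum (fun k => (fib1 k : ℝ) * u k / q ^ k) x := by
  have hqpos := hq_pos hq1
  have inv : ∀ h, 0 ≤ r h ∧ r h ≤ S q h := by
    intro h
    induction h with
    | zero =>
      refine ⟨hr0 ▸ hx0, ?_⟩
      rw [hr0, S_zero hq1]; exact hx1
    | succ n ih =>
      obtain ⟨ih1, ih2⟩ := ih
      by_cases hc : (fib1 n : ℝ) ≤ r n ∧ r n ≤ S q n
      · have hun : u n = 1 := by rw [hu n, if_pos hc]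
        have hrec := S_rec hq1 n
        have h5 : q * (S q n - (fib1 n:ℝ)) = S q (n+1) := by
          rw [hrec]; field_simp; ring
        constructor
        · rw [hr n, hun]; nlinarith [hc.1]
        · rw [hr n, hun, ← h5]; nlinarith [ih2]
      · have hun : u n = 0 := by rw [hu n, if_neg hc]
        have hlt : r n < (fib1 n:ℝ) := by
          by_contra hge
          push_neg at hge
          exact hc ⟨hge, ih2⟩
        have hmul := S_ge_mul hq1 hq2 n
        constructor
        · rw [hr n, hun]; nlinarith
        · rw [hr n, hun]; nlinarith
  have part : ∀ h, ∑ k ∈ Finset.range h, (fib1 k:ℝ) * u k / q^k = x - r h / q^h := by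
    intro h
    induction h with
    | zero => simp [hr0]
    | succ n ih =>
      rw [Finset.sum_range_succ, ih, hr n]
      have hne : q^n ≠ 0 := pow_ne_zero _ hqpos.ne'
      field_simp
      ring
  rw [hasSum_iff_tendsto_nat_of_nonneg]
  · have h0 : Filter.Tendsto (fun h : ℕ => r h / q^h) Filter.atTop (nhds 0) := by
      apply squeeze_zero (fun h => div_nonneg (inv h).1 (pow_pos hqpos h).le)
        (g := fun h => (1 - phi/q)⁻¹ * (phi/q)^h)
      · intro h
        have h1 : r h / q^h ≤ S q h / q^h :=
          div_le_div_of_nonneg_right (inv h).2 (pow_pos hqpos h).le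
        apply h1.trans
        have h3 : S q h / q^h ≤ phi^h * (1-phi/q)⁻¹ / q^h :=
          div_le_div_of_nonneg_right (S_le hq1 h) (pow_pos hqpos h).le
        apply h3.trans_eq
        rw [div_pow]
        field_simp
      · have := tendsto_pow_atTop_nhds_zero_of_lt_one (ratio_nonneg hq1) (ratio_lt_one hq1)
        simpa using this.const_mul ((1 - phi/q)⁻¹)
    have he : (fun n => ∑ i ∈ Finset.range n, (fib1 i:ℝ)*u i/q^i) = fun n => x - r n/q^n :=
      funext part
    rw [he]
    simpa using tendsto_const_nhds.sub h0
  · intro i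
    rw [hu i]
    split
    · exact div_nonneg (by positivity) (pow_nonneg hqpos.le i)
    · simp

open Classical in
/-- Greedy remainder sequence. -/
noncomputable def rG (q y : ℝ) : ℕ → ℝ
  | 0 => y
  | (h+1) => q * (rG q y h -
      (if (fib1 h:ℝ) ≤ rG q y h ∧ rG q y h ≤ S q h then 1 else 0) * (fib1 h:ℝ))

open Classical in
/-- Greedy digit sequence. -/
noncomputable def uG (q y : ℝ) (h : ℕ) : ℝ :=
  if (fib1 h:ℝ) ≤ rG q y h ∧ rG q y h ≤ S q h then 1 else 0

open Classical in
theorem stmt1 (q : ℝ) (hq1 : phi < q) (hq2 : q ≤ 1 + Real.sqrt 3)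
    (x : ℝ) (hx0 : 0 ≤ x) (hx1 : x ≤ q ^ 2 / (q ^ 2 - q - 1))
    (r u : ℕ → ℝ)
    (hr0 : r 0 = x)
    (hu : ∀ h : ℕ, u h = if (fib1 h : ℝ) ≤ r h ∧ r h ≤ S q h then 1 else 0)
    (hr : ∀ h : ℕ, r (h + 1) = q * (r h - u h * (fib1 h : ℝ))) :
    HasSum (fun k => (fib1 k : ℝ) * u k / q ^ k) x ∧
    {y : ℝ | ∃ w : ℕ → ℝ, (∀ n, w n = 0 ∨ w n = 1) ∧
        HasSum (fun k => w k * (fib1 k : ℝ) / q ^ k) y} =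
      Set.Icc 0 (q ^ 2 / (q ^ 2 - q - 1)) := by
  have hqpos := hq_pos hq1
  constructor
  · exact key hq1 hq2 x hx0 hx1 r u hr0 hu hr
  · ext y
    simp only [Set.mem_setOf_eq, Set.mem_Icc]
    constructor
    · rintro ⟨w, hw01, hwsum⟩
      constructor
      · apply hwsum.nonneg
        intro k
        rcases hw01 k with h|h <;>
          simp only [h, zero_mul, zero_div, one_mul, le_refl] <;>
          exact div_nonneg (by positivity) (pow_nonneg hqpos.le k)
      · have hS : HasSum (fun k => (fib1 k:ℝ)/q^k) (S q 0) := by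
          have := (summable_S hq1 0).hasSum
          simpa [S] using this
        have hle := hasSum_le (f := fun k => w k * (fib1 k:ℝ)/q^k)
          (g := fun k => (fib1 k:ℝ)/q^k) ?_ hwsum hS
        · rwa [S_zero hq1] at hle
        · intro k
          rcases hw01 k with h|h <;>
            simp only [h, zero_mul, zero_div, one_mul, le_refl] <;>
            exact div_nonneg (by positivity) (pow_nonneg hqpos.le k)
    · rintro ⟨hy0, hy1⟩
      have hk := key hq1 hq2 y hy0 hy1 (rG q y) (uG q y) rfl (fun h => rfl)
        (fun h => by rw [uG, rG])
      refine ⟨uG q y, fun n => ?_, ?_⟩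
      · by_cases hc : (fib1 n:ℝ) ≤ rG q y n ∧ rG q y n ≤ S q n
        · right; rw [uG, if_pos hc]
        · left; rw [uG, if_neg hc]
      · have he : (fun k => uG q y k * (fib1 k:ℝ)/q^k)
            = fun k => (fib1 k:ℝ) * uG q y k /q^k := by
          funext k; ring
        rw [he]
        exact hk
end

section
/- Let q be a real number with q > φ. Define Q_∞ := { ( ∑_{k=0}^∞ u_k f_k/q^k , ∑_{k=0}^∞ u_{k+1} f_k/q^k ) : u ∈ {0,1}^ℕ } ⊂ ℝ², and for c ∈ {0,1} define F_{q,c} : ℝ² → ℝ² by F_{q,c}(x, y) = ( c + x/q + y/q² , x ). Then F_{q,0}(Q_∞) ∪ F_{q,1}(Q_∞) = Q_∞. -/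
set_option maxHeartbeats 1000000


/-- Prepend a value to a sequence. -/
def shift (c : ℝ) (v : ℕ → ℝ) : ℕ → ℝ
  | 0 => c
  | n + 1 => v n

lemma sq_sqrt5 : Real.sqrt 5 ^ 2 = 5 := Real.sq_sqrt (by norm_num)

lemma one_lt_phi : 1 < phi := by
  have h := sq_sqrt5
  have h0 := Real.sqrt_nonneg 5
  unfold phi
  nlinarith

lemma fib1_le_phi_pow (k : ℕ) : (fib1 k : ℝ) ≤ phi ^ k := by
  induction k using Nat.strong_induction_on with
  | _ k ih =>
    match k with
    | 0 => simp [fib1]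
    | 1 => simpa [fib1] using one_lt_phi.le
    | n + 2 =>
      have h1 := ih (n + 1) (by omega)
      have h2 := ih n (by omega)
      have hpow : phi ^ (n + 2) = phi ^ n * phi ^ 2 := by ring
      have : (fib1 (n + 2) : ℝ) = (fib1 (n + 1) : ℝ) + fib1 n := by
        simp [fib1]
      rw [this, hpow, phi_sq]
      have hpn : (0:ℝ) ≤ phi ^ n := pow_nonneg (by linarith [one_lt_phi]) n
      nlinarith [pow_succ phi n]

/-- The key summation identity. -/
lemma key_hasSum (q : ℝ) (hq0 : q ≠ 0) (v : ℕ → ℝ) (a b c : ℝ)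
    (ha : HasSum (fun k => v k * (fib1 k : ℝ) / q ^ k) a)
    (hb : HasSum (fun k => v (k + 1) * (fib1 k : ℝ) / q ^ k) b) :
    HasSum (fun k => shift c v k * (fib1 k : ℝ) / q ^ k) (c + a / q + b / q ^ 2) := by
  set w : ℕ → ℝ := shift 0 (fun k => v (k + 1) * (fib1 k : ℝ) / q ^ k / q ^ 2) with hw_def
  have hw1 : HasSum (fun n => w (n + 1)) (b / q ^ 2) := hb.div_const _
  have hw : HasSum w (b / q ^ 2) := by
    have h := (hasSum_nat_add_iff (f := w) 1).mp hw1
    simpa [hw_def, shift] using h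
  have hsum : HasSum (fun k => v k * (fib1 (k + 1) : ℝ) / q ^ (k + 1)) (a / q + b / q ^ 2) := by
    have h := (ha.div_const q).add hw
    convert h using 1
    · rfl
    funext k
    cases k with
    | zero => simp [hw_def, shift, fib1]
    | succ n =>
      show v (n + 1) * (fib1 (n + 2) : ℝ) / q ^ (n + 2) =
        v (n + 1) * (fib1 (n + 1) : ℝ) / q ^ (n + 1) / q +
        v (n + 1) * (fib1 n : ℝ) / q ^ n / q ^ 2
      have hf : (fib1 (n + 2) : ℝ) = (fib1 (n + 1) : ℝ) + fib1 n := by simp [fib1]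
      rw [hf]
      field_simp
      ring
  have hshift : (fun n => shift c v (n + 1) * (fib1 (n + 1) : ℝ) / q ^ (n + 1)) =
      fun k => v k * (fib1 (k + 1) : ℝ) / q ^ (k + 1) := by
    funext k; simp [shift]
  have h := (hasSum_nat_add_iff
      (f := fun k => shift c v k * (fib1 k : ℝ) / q ^ k) 1).mp (hshift ▸ hsum)
  have h0 : shift c v 0 * (fib1 0 : ℝ) / q ^ 0 = c := by simp [shift, fib1]
  simp only [Finset.range_one, Finset.sum_singleton, h0] at h
  convert h using 1
  · rfl
  ring

theorem stmt17 (q : ℝ) (hq : phi < q) :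
    let Q : Set (ℝ × ℝ) := {x | ∃ u : ℕ → ℝ, (∀ n, u n = 0 ∨ u n = 1) ∧
      HasSum (fun k => u k * (fib1 k : ℝ) / q ^ k) x.1 ∧
      HasSum (fun k => u (k + 1) * (fib1 k : ℝ) / q ^ k) x.2}
    let F : ℝ → ℝ × ℝ → ℝ × ℝ := fun c x => (c + x.1 / q + x.2 / q ^ 2, x.1)
    F 0 '' Q ∪ F 1 '' Q = Q := by
  intro Q F
  have hphi_pos : (0:ℝ) < phi := lt_trans one_pos one_lt_phi
  have hq_pos : (0:ℝ) < q := lt_trans hphi_pos hq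
  have hq0 : q ≠ 0 := ne_of_gt hq_pos
  -- forward inclusion : F c '' Q ⊆ Q
  have hforward : ∀ c : ℝ, (c = 0 ∨ c = 1) → ∀ p ∈ Q, F c p ∈ Q := by
    rintro c hc p ⟨u, hu01, h1, h2⟩
    refine ⟨shift c u, ?_, ?_, ?_⟩
    · intro n
      cases n with
      | zero => simpa [shift] using hc
      | succ m => simpa [shift] using hu01 m
    · exact key_hasSum q hq0 u p.1 p.2 c h1 h2
    · have : (fun k => shift c u (k + 1) * (fib1 k : ℝ) / q ^ k) =
        fun k => u k * (fib1 k : ℝ) / q ^ k := by funext k; simp [shift]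
      rw [this]
      exact h1
  ext x
  constructor
  · rintro (⟨p, hp, rfl⟩ | ⟨p, hp, rfl⟩)
    · exact hforward 0 (Or.inl rfl) p hp
    · exact hforward 1 (Or.inr rfl) p hp
  · rintro ⟨u, hu01, h1, h2⟩
    -- the tail sum exists
    have hsummable : Summable (fun k => u (k + 2) * (fib1 k : ℝ) / q ^ k) := by
      apply Summable.of_nonneg_of_le (f := fun k => (phi / q) ^ k)
      · intro k
        have hu : (0:ℝ) ≤ u (k + 2) := by rcases hu01 (k + 2) with h | h <;> simp [h]
        positivity
      · intro k
        have hu : u (k + 2) ≤ 1 := by rcases hu01 (k + 2) with h | h <;> simp [h]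
        have hu0 : (0:ℝ) ≤ u (k + 2) := by rcases hu01 (k + 2) with h | h <;> simp [h]
        have hf : (0:ℝ) ≤ (fib1 k : ℝ) := Nat.cast_nonneg _
        have hqk : (0:ℝ) < q ^ k := pow_pos hq_pos k
        have hnum : u (k + 2) * (fib1 k : ℝ) ≤ phi ^ k := by
          calc u (k + 2) * (fib1 k : ℝ) ≤ 1 * phi ^ k :=
                mul_le_mul hu (fib1_le_phi_pow k) hf (by norm_num)
            _ = phi ^ k := one_mul _
        rw [div_pow]
        exact (div_le_div_iff_of_pos_right hqk).mpr hnum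
      · exact summable_geometric_of_lt_one (div_nonneg hphi_pos.le hq_pos.le)
          ((div_lt_one hq_pos).mpr hq)
    obtain ⟨y, hy⟩ : ∃ y, HasSum (fun k => u (k + 2) * (fib1 k : ℝ) / q ^ k) y :=
      ⟨_, hsummable.hasSum⟩
    -- key identity with v := fun k => u (k+1)
    have hkey := key_hasSum q hq0 (fun k => u (k + 1)) x.2 y (u 0) h2 hy
    have hshift_eq : (fun k => shift (u 0) (fun k => u (k + 1)) k * (fib1 k : ℝ) / q ^ k) =
        fun k => u k * (fib1 k : ℝ) / q ^ k := by
      funext k; cases k with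
      | zero => simp [shift]
      | succ n => simp [shift]
    rw [hshift_eq] at hkey
    have hx1 : x.1 = u 0 + x.2 / q + y / q ^ 2 := h1.unique hkey
    have hmemQ : (x.2, y) ∈ Q := ⟨fun k => u (k + 1), fun n => hu01 (n + 1), h2, hy⟩
    have himg : F (u 0) (x.2, y) = x := by
      simp only [F]
      exact Prod.ext (by simp [hx1]) rfl
    rcases hu01 0 with h0 | h0
    · left; exact ⟨(x.2, y), hmemQ, by rw [h0] at himg; exact himg⟩
    · right; exact ⟨(x.2, y), hmemQ, by rw [h0] at himg; exact himg⟩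
end
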